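/- Let m ≥ 1, n ≥ 2m, and let a, b : Fin m → Fin n be injective maps with disjoint ranges (write i_l = a(l), j_l = b(l)). For every strict total order r on Fin n, the incidence vector χ_r satisfies the fence inequality f(χ_r) ≤ 1, where f(x) = 2·∑_{l=1}^{m} x(i_l, j_l) − ∑_{l=1}^{m} ∑_{q=1}^{m} x(i_l, j_q). -/
import Mathlib


open scoped BigOperators

/-- A point of the linear ordering polytope relaxation `B_n`. -/
def IsBn {n : ℕ} (x : Fin n → Fin n → ℝ) : Prop :=
  (∀ i, x i i = 0) ∧
  (∀ i j : Fin n, i ≠ j → 0 ≤ x i j ∧ x i j ≤ 1) ∧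
  (∀ i j : Fin n, i ≠ j → x i j + x j i = 1) ∧
  (∀ i j k : Fin n, i ≠ j → i ≠ k → j ≠ k →
    0 ≤ x i j + x j k - x i k ∧ x i j + x j k - x i k ≤ 1)

/-- A strict total order on `Fin n`: irreflexive, transitive and total. -/
def IsSTO {n : ℕ} (r : Fin n → Fin n → Prop) : Prop :=
  (∀ i, ¬ r i i) ∧ (∀ i j k, r i j → r j k → r i k) ∧
  (∀ i j : Fin n, i ≠ j → r i j ∨ r j i)

open Classical in
/-- The incidence vector `χ_r` of a relation `r`. -/
noncomputable def chi {n : ℕ} (r : Fin n → Fin n → Prop) : Fin n → Fin n → ℝ :=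
  fun i j => if r i j then 1 else 0

/-- The fence function `f(x) = 2·∑ l, x(a l, b l) − ∑ l, ∑ q, x(a l, b q)`. -/
noncomputable def fence {m n : ℕ} (a b : Fin m → Fin n)
    (x : Fin n → Fin n → ℝ) : ℝ :=
  2 * ∑ l, x (a l) (b l) - ∑ l, ∑ q, x (a l) (b q)

theorem fence_inequality {m n : ℕ} (hm : 1 ≤ m) (hn : 2 * m ≤ n)
    (a b : Fin m → Fin n) (ha : Function.Injective a) (hb : Function.Injective b)
    (hab : ∀ l q, a l ≠ b q)
    (r : Fin n → Fin n → Prop) (hr : IsSTO r) :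
    fence a b (chi r) ≤ 1 := by
  classical
  obtain ⟨hirr, htrans, htot⟩ := hr
  set S : Finset (Fin m) := Finset.univ.filter (fun l => r (a l) (b l)) with hS
  set T : Finset (Fin m × Fin m) :=
    (Finset.univ ×ˢ Finset.univ).filter (fun p => ¬ p.1 = p.2 ∧ r (a p.1) (b p.2)) with hT
  have h1 : ∑ l, chi r (a l) (b l) = (S.card : ℝ) := by
    simp [chi, hS, Finset.sum_boole]
  have h2 : ∑ l, ∑ q, chi r (a l) (b q) = (S.card : ℝ) + T.card := by
    rw [← Finset.sum_product']
    have : ∑ p ∈ Finset.univ ×ˢ Finset.univ, chi r (a p.1) (b p.2)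
        = (((Finset.univ ×ˢ Finset.univ).filter (fun p : Fin m × Fin m => r (a p.1) (b p.2))).card : ℝ) := by
      simp [chi, Finset.sum_boole]
    rw [this]
    set B := ((Finset.univ ×ˢ Finset.univ).filter (fun p : Fin m × Fin m => r (a p.1) (b p.2)))
    have hsplit : (B.filter (fun p => p.1 = p.2)).card + (B.filter (fun p => ¬ p.1 = p.2)).card = B.card :=
      Finset.card_filter_add_card_filter_not _
    have hd : B.filter (fun p => p.1 = p.2) = S.image (fun l => (l, l)) := by
      ext p
      simp only [Finset.mem_filter, Finset.mem_image, Finset.mem_product, Finset.mem_univ,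
        true_and, hS, B]
      aesop
    have hdc : (B.filter (fun p => p.1 = p.2)).card = S.card := by
      rw [hd, Finset.card_image_of_injective _ (fun x y h => by simpa [Prod.ext_iff] using h)]
    have ht : B.filter (fun p => ¬ p.1 = p.2) = T := by
      rw [hT]
      rw [Finset.filter_filter]
      congr 1
      ext p
      tauto
    have : B.card = S.card + T.card := by rw [← hsplit, hdc, ht]
    rw [this]; push_cast; ring
  have key : S.card * S.card - S.card ≤ 2 * T.card := by
    have hsub : S.offDiag ⊆ T ∪ T.image Prod.swap := by
      intro p hp
      rw [Finset.mem_offDiag] at hp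
      obtain ⟨hp1, hp2, hne⟩ := hp
      rw [hS, Finset.mem_filter] at hp1 hp2
      have h1 := hp1.2
      have h2 := hp2.2
      rcases htot (b p.1) (a p.2) (Ne.symm (hab _ _)) with hbl | hbl
      · apply Finset.mem_union_left
        rw [hT, Finset.mem_filter]
        exact ⟨by simp, hne, htrans _ _ _ (htrans _ _ _ h1 hbl) h2⟩
      · apply Finset.mem_union_right
        rw [Finset.mem_image]
        refine ⟨(p.2, p.1), ?_, by simp⟩
        rw [hT, Finset.mem_filter]
        exact ⟨by simp, fun h => hne (by simpa using h.symm), hbl⟩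
    have hc : S.offDiag.card ≤ T.card + T.card := by
      calc S.offDiag.card ≤ (T ∪ T.image Prod.swap).card := Finset.card_le_card hsub
        _ ≤ T.card + (T.image Prod.swap).card := Finset.card_union_le _ _
        _ ≤ T.card + T.card := Nat.add_le_add_left Finset.card_image_le _
    rw [Finset.offDiag_card] at hc
    omega
  have knat : S.card ≤ T.card + 1 := by
    by_cases hk : S.card ≤ 1
    · omega
    · have h2k : 2 ≤ S.card := by omega
      have h3 : 2 * (S.card - 1) ≤ S.card * (S.card - 1) :=
        Nat.mul_le_mul_right _ h2k
      have h4 : S.card * (S.card - 1) = S.card * S.card - S.card := by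
        rw [Nat.mul_sub, Nat.mul_one]
      omega
  have : fence a b (chi r) = (S.card : ℝ) - T.card := by
    rw [fence, h1, h2]; ring
  rw [this]
  have : (S.card : ℝ) ≤ T.card + 1 := by exact_mod_cast knat
  linarith
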